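/- arXiv:1711.08833 — 5 statements merged into one kernel-verified Lean document; each statement's English description precedes it below -/
import Mathlib

section
/- For any W ∈ ℝ^n, any α ∈ ℝ, and any T ∈ {-1,0,1}^n with sparsity k ≥ 1, one has ‖αT − W‖² ≥ ‖W‖² − ‖W_[k]‖₁²/k, where ‖W_[k]‖₁ is the sum of the k largest absolute values of entries of W. -/
open Finset

/-- Sum of the `k` largest absolute values of entries of `W`:
the supremum over all subsets of cardinality `k` of the sum of `|W i|`. -/
noncomputable def sumTopK {n : ℕ} (W : Fin n → ℝ) (k : ℕ) : ℝ :=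
  sSup ((fun s : Finset (Fin n) => ∑ i ∈ s, |W i|) '' {s : Finset (Fin n) | s.card = k})

/-- A ternary vector takes values in `{-1, 0, 1}`. -/
def IsTernary {n : ℕ} (T : Fin n → ℝ) : Prop := ∀ i, T i = -1 ∨ T i = 0 ∨ T i = 1

/-- `max_{1 ≤ k ≤ n} ‖W_[k]‖₁² / k`. -/
noncomputable def maxRatio {n : ℕ} (W : Fin n → ℝ) : ℝ :=
  sSup {x : ℝ | ∃ k : ℕ, 1 ≤ k ∧ k ≤ n ∧ x = (sumTopK W k)^2 / (k : ℝ)}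

/-! The optimal scale for a fixed `T` is `α = ⟪T, W⟫ / ‖T‖²`, which leaves the residual
`‖W‖² - ⟪T, W⟫² / ‖T‖²`. For ternary `T` of sparsity `k` we have `‖T‖² = k`, and `⟪T, W⟫` is a
signed sum of `k` entries of `W`, hence bounded in absolute value by `‖W_[k]‖₁`. -/

/-- Completing the square in `α`; for `x = 0` both sides equal `‖w‖²` (as `0 / 0 = 0`). -/
theorem sum_sq_sub_sq_inner_div_le {ι : Type*} [Fintype ι] (x w : ι → ℝ) (α : ℝ) :
    ∑ i, w i ^ 2 - (∑ i, x i * w i) ^ 2 / ∑ i, x i ^ 2 ≤ ∑ i, (α * x i - w i) ^ 2 := by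
  set X := ∑ i, x i ^ 2
  set P := ∑ i, x i * w i
  have hexpand : ∑ i, (α * x i - w i) ^ 2 = α ^ 2 * X - 2 * α * P + ∑ i, w i ^ 2 := by
    simp only [X, P, mul_sum, ← sum_sub_distrib, ← sum_add_distrib]
    exact sum_congr rfl fun i _ => by ring
  rw [hexpand]
  obtain hX | hX : X = 0 ∨ 0 < X := (sum_nonneg fun i _ => sq_nonneg (x i)).eq_or_lt'
  · have hP : P = 0 := by
      have := sum_mul_sq_le_sq_mul_sq univ x w
      rw [show ∑ i, x i ^ 2 = 0 from hX, zero_mul] at this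
      exact pow_eq_zero_iff two_ne_zero |>.mp (le_antisymm this (sq_nonneg P))
    simp [hX, hP]
  · have hX0 : X ≠ 0 := hX.ne'
    have : 0 ≤ (α * X - P) ^ 2 / X := div_nonneg (sq_nonneg _) hX.le
    have hsq : (α * X - P) ^ 2 / X = α ^ 2 * X - 2 * α * P + P ^ 2 / X := by
      field_simp
      ring
    linarith

theorem sum_abs_le_sumTopK {n : ℕ} (W : Fin n → ℝ) {s : Finset (Fin n)} :
    ∑ i ∈ s, |W i| ≤ sumTopK W s.card :=
  le_csSup (Set.toFinite _).bddAbove ⟨s, rfl, rfl⟩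

namespace IsTernary

variable {n : ℕ} {T : Fin n → ℝ}

theorem sq_eq_ite (hT : IsTernary T) (i : Fin n) : T i ^ 2 = if T i ≠ 0 then 1 else 0 := by
  rcases hT i with h | h | h <;> simp [h]

theorem abs_le_one (hT : IsTernary T) (i : Fin n) : |T i| ≤ 1 := by
  rcases hT i with h | h | h <;> simp [h]

theorem sum_sq_eq_card (hT : IsTernary T) :
    ∑ i, T i ^ 2 = (univ.filter fun i => T i ≠ 0).card := by
  simp only [hT.sq_eq_ite, sum_ite, sum_const_zero, add_zero, sum_const, nsmul_eq_mul, mul_one]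

theorem abs_sum_mul_le_sumTopK (hT : IsTernary T) (W : Fin n → ℝ) :
    |∑ i, T i * W i| ≤ sumTopK W (univ.filter fun i => T i ≠ 0).card := by
  have hsupport : ∑ i, T i * W i = ∑ i ∈ univ.filter fun i => T i ≠ 0, T i * W i :=
    (sum_filter_of_ne fun _ _ h => left_ne_zero_of_mul h).symm
  calc |∑ i, T i * W i| ≤ ∑ i ∈ univ.filter fun i => T i ≠ 0, |T i * W i| :=
        hsupport ▸ abs_sum_le_sum_abs _ _
    _ ≤ ∑ i ∈ univ.filter fun i => T i ≠ 0, |W i| := by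
        refine sum_le_sum fun i _ => ?_
        rw [abs_mul]
        exact mul_le_of_le_one_left (abs_nonneg _) (hT.abs_le_one i)
    _ ≤ _ := sum_abs_le_sumTopK W

end IsTernary

theorem stmt2_general {n : ℕ} (W : Fin n → ℝ) (α : ℝ) (T : Fin n → ℝ) (hT : IsTernary T)
    (k : ℕ) (hk : (Finset.univ.filter fun i => T i ≠ 0).card = k) :
    (∑ i, (W i)^2) - (sumTopK W k)^2 / (k : ℝ) ≤ ∑ i, (α * T i - W i)^2 := by
  have hnorm : ∑ i, T i ^ 2 = k := by rw [hT.sum_sq_eq_card, hk]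
  have hinner : (∑ i, T i * W i) ^ 2 ≤ sumTopK W k ^ 2 :=
    hk ▸ sq_le_sq.mpr ((hT.abs_sum_mul_le_sumTopK W).trans (le_abs_self _))
  calc (∑ i, W i ^ 2) - sumTopK W k ^ 2 / k
      ≤ ∑ i, W i ^ 2 - (∑ i, T i * W i) ^ 2 / ∑ i, T i ^ 2 := by
        rw [hnorm]
        gcongr
    _ ≤ ∑ i, (α * T i - W i) ^ 2 := sum_sq_sub_sq_inner_div_le T W α

theorem stmt2 {n : ℕ} (W : Fin n → ℝ) (α : ℝ) (T : Fin n → ℝ) (hT : IsTernary T)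
    (k : ℕ) (hk : (Finset.univ.filter fun i => T i ≠ 0).card = k) (hk1 : 1 ≤ k) :
    (∑ i, (W i)^2) - (sumTopK W k)^2 / (k : ℝ) ≤ ∑ i, (α * T i - W i)^2 :=
  stmt2_general W α T hT k hk
end

section
/- Let W ∈ ℝ^n be nonzero and let k* = argmax_{1 ≤ k ≤ n} ‖W_[k]‖₁²/k. Set T* = sign(W_[k*]) (entrywise sign, with zero entries mapped to 0) and α* = ‖W_[k*]‖₁ / k*. Then for every α > 0 and every ternary T ∈ {-1,0,1}^n, ‖α* T* − W‖² ≤ ‖α T − W‖²; that is, (α*, T*) solves min_{α>0, T∈{-1,0,1}^n} ‖αT − W‖². -/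
open Finset

lemma sumTopK_ge {n : ℕ} (W : Fin n → ℝ) (s : Finset (Fin n)) :
    ∑ i ∈ s, |W i| ≤ sumTopK W s.card :=
  le_csSup (Set.Finite.bddAbove (Set.toFinite _)) ⟨s, rfl, rfl⟩

theorem stmt3 {n : ℕ} (W : Fin n → ℝ) (hW : W ≠ 0)
    (kstar : ℕ) (hk1 : 1 ≤ kstar) (hkn : kstar ≤ n)
    (hmax : ∀ k : ℕ, 1 ≤ k → k ≤ n →
      (sumTopK W k)^2 / (k : ℝ) ≤ (sumTopK W kstar)^2 / (kstar : ℝ))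
    (S : Finset (Fin n)) (hS : S.card = kstar)
    (hSmax : ∑ i ∈ S, |W i| = sumTopK W kstar) :
    ∀ α : ℝ, 0 < α → ∀ T : Fin n → ℝ, IsTernary T →
      ∑ i, ((sumTopK W kstar / (kstar : ℝ)) * (if i ∈ S then Real.sign (W i) else 0) - W i)^2
        ≤ ∑ i, (α * T i - W i)^2 := by
  intro α hα T hT
  set A : ℝ := sumTopK W kstar with hA
  have hk0 : (0:ℝ) < (kstar : ℝ) := by exact_mod_cast hk1
  -- LHS bound
  have hLHS : ∑ i, (A / (kstar:ℝ) * (if i ∈ S then Real.sign (W i) else 0) - W i)^2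
      ≤ -(A^2)/(kstar:ℝ) + ∑ i, (W i)^2 := by
    have hsplit : ∑ i, (A/(kstar:ℝ) * (if i ∈ S then Real.sign (W i) else 0) - W i)^2
        = ∑ i ∈ S, (A/(kstar:ℝ) * Real.sign (W i) - W i)^2 + ∑ i ∈ Sᶜ, (W i)^2 := by
      rw [← Finset.sum_add_sum_compl S]
      congr 1
      · exact Finset.sum_congr rfl fun i hi => by rw [if_pos hi]
      · exact Finset.sum_congr rfl fun i hi => by
          rw [if_neg (Finset.mem_compl.mp hi)]; ring_nf
    have h1 : ∀ i ∈ S, (A/(kstar:ℝ) * Real.sign (W i) - W i)^2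
        ≤ (A/(kstar:ℝ))^2 - 2*(A/(kstar:ℝ))*|W i| + (W i)^2 := by
      intro i _
      rcases lt_trichotomy (W i) 0 with h|h|h
      · rw [Real.sign_of_neg h, abs_of_neg h]; nlinarith []
      · rw [h]; simp [Real.sign_zero]; positivity
      · rw [Real.sign_of_pos h, abs_of_pos h]; nlinarith []
    have h2 : ∑ i ∈ S, (A/(kstar:ℝ) * Real.sign (W i) - W i)^2
        ≤ (kstar:ℝ)*(A/(kstar:ℝ))^2 - 2*(A/(kstar:ℝ))*A + ∑ i ∈ S, (W i)^2 := by
      calc ∑ i ∈ S, (A/(kstar:ℝ) * Real.sign (W i) - W i)^2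
          ≤ ∑ i ∈ S, ((A/(kstar:ℝ))^2 - 2*(A/(kstar:ℝ))*|W i| + (W i)^2) :=
            Finset.sum_le_sum h1
        _ = (S.card : ℝ)*(A/(kstar:ℝ))^2 - 2*(A/(kstar:ℝ))*(∑ i ∈ S, |W i|)
              + ∑ i ∈ S, (W i)^2 := by
            rw [Finset.sum_add_distrib, Finset.sum_sub_distrib, Finset.sum_const,
              ← Finset.mul_sum]
            ring
        _ = (kstar:ℝ)*(A/(kstar:ℝ))^2 - 2*(A/(kstar:ℝ))*A + ∑ i ∈ S, (W i)^2 := by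
            rw [hS, hSmax]
    have hkey : (kstar:ℝ)*(A/(kstar:ℝ))^2 - 2*(A/(kstar:ℝ))*A = -(A^2)/(kstar:ℝ) := by
      field_simp; ring
    have hcompl : ∑ i ∈ S, (W i)^2 + ∑ i ∈ Sᶜ, (W i)^2 = ∑ i, (W i)^2 :=
      Finset.sum_add_sum_compl S _
    rw [hsplit]
    linarith [h2]
  -- RHS bound
  have hRHS : -(A^2)/(kstar:ℝ) + ∑ i, (W i)^2 ≤ ∑ i, (α * T i - W i)^2 := by
    set s : Finset (Fin n) := univ.filter (fun i => T i ≠ 0) with hs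
    have hexp : ∑ i, (α * T i - W i)^2
        = α^2 * (s.card : ℝ) - 2*α*(∑ i ∈ s, T i * W i) + ∑ i, (W i)^2 := by
      have e1 : ∀ i ∈ (univ : Finset (Fin n)),
          (α * T i - W i)^2 = α^2 * (T i)^2 - 2*α*(T i * W i) + (W i)^2 :=
        fun i _ => by ring
      rw [Finset.sum_congr rfl e1, Finset.sum_add_distrib, Finset.sum_sub_distrib,
        ← Finset.mul_sum, ← Finset.mul_sum]
      have e2 : ∑ i, (T i)^2 = (s.card : ℝ) := by
        have : ∀ i ∈ (univ : Finset (Fin n)),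
            (T i)^2 = if T i ≠ 0 then (1:ℝ) else 0 := by
          intro i _
          rcases hT i with h|h|h <;> simp [h]
        rw [Finset.sum_congr rfl this, Finset.sum_boole, hs]
      have e3 : ∑ i ∈ s, T i * W i = ∑ i, T i * W i := by
        apply Finset.sum_filter_of_ne
        intro i _ h hTi
        exact h (by rw [hTi]; ring)
      rw [e2, e3]
    have hTW : ∑ i ∈ s, T i * W i ≤ ∑ i ∈ s, |W i| := by
      apply Finset.sum_le_sum
      intro i _
      calc T i * W i ≤ |T i * W i| := le_abs_self _
        _ = |T i| * |W i| := abs_mul _ _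
        _ ≤ 1 * |W i| := by
            apply mul_le_mul_of_nonneg_right _ (abs_nonneg _)
            rcases hT i with h|h|h <;> simp [h]
        _ = |W i| := one_mul _
    have hsk : ∑ i ∈ s, |W i| ≤ sumTopK W s.card := sumTopK_ge W s
    rcases Nat.eq_zero_or_pos s.card with hc0 | hc1
    · have hsempty : s = ∅ := Finset.card_eq_zero.mp hc0
      have hAnn : 0 ≤ A := by rw [← hSmax]; positivity
      rw [hexp, hsempty]
      simp only [Finset.sum_empty, Finset.card_empty, Nat.cast_zero]
      have : -(A^2)/(kstar:ℝ) ≤ 0 := by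
        apply div_nonpos_of_nonpos_of_nonneg <;> [nlinarith []; linarith]
      nlinarith []
    · have hcn : s.card ≤ n := by
        calc s.card ≤ (univ : Finset (Fin n)).card := Finset.card_filter_le _ _
          _ = n := by simp
      have hm := hmax s.card hc1 hcn
      set B : ℝ := sumTopK W s.card with hB
      have hm0 : (0:ℝ) < (s.card : ℝ) := by exact_mod_cast hc1
      have hq : -(B^2)/(s.card:ℝ) ≤ α^2 * (s.card : ℝ) - 2*α*B := by
        rw [div_le_iff₀ hm0] at *
        nlinarith [sq_nonneg (α * (s.card:ℝ) - B), hm0]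
      have hq2 : -(A^2)/(kstar:ℝ) ≤ -(B^2)/(s.card:ℝ) := by
        rw [div_le_div_iff₀ hk0 hm0]
        rw [div_le_div_iff₀ hm0 hk0] at hm
        nlinarith [hm]
      have hTWB : ∑ i ∈ s, T i * W i ≤ B := le_trans hTW hsk
      rw [hexp]
      nlinarith [hα, hTWB, hq, hq2]
  linarith [hLHS, hRHS]
end

section
/- For nonzero W ∈ ℝ^n, the minimal squared Euclidean distance from W to the set 𝒯 = {αT : α > 0, T ∈ {-1,0,1}^n} equals ‖W‖² − max_{1 ≤ k ≤ n} ‖W_[k]‖₁²/k. -/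
open Finset

lemma sumTopK_spec {n : ℕ} (W : Fin n → ℝ) {k : ℕ} (hk : k ≤ n) :
    ∃ s : Finset (Fin n), s.card = k ∧ sumTopK W k = ∑ i ∈ s, |W i| := by
  obtain ⟨s, -, hs⟩ := Finset.exists_subset_card_eq
    (show k ≤ (Finset.univ : Finset (Fin n)).card by simpa using hk)
  have hfin : ((fun s : Finset (Fin n) => ∑ i ∈ s, |W i|) ''
      {s : Finset (Fin n) | s.card = k}).Finite := (Set.toFinite _).image _
  have hne : ((fun s : Finset (Fin n) => ∑ i ∈ s, |W i|) ''
      {s : Finset (Fin n) | s.card = k}).Nonempty := ⟨_, ⟨s, hs, rfl⟩⟩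
  obtain ⟨t, ht, hteq⟩ := hne.csSup_mem hfin
  exact ⟨t, ht, hteq.symm⟩

lemma le_sumTopK {n : ℕ} (W : Fin n → ℝ) {k : ℕ} (s : Finset (Fin n)) (hs : s.card = k) :
    ∑ i ∈ s, |W i| ≤ sumTopK W k :=
  le_csSup (((Set.toFinite _).image _).bddAbove) ⟨s, hs, rfl⟩

lemma maxRatio_set_eq {n : ℕ} (W : Fin n → ℝ) :
    {x : ℝ | ∃ k : ℕ, 1 ≤ k ∧ k ≤ n ∧ x = (sumTopK W k)^2 / (k : ℝ)} =
      (fun k : ℕ => (sumTopK W k)^2 / (k : ℝ)) '' (Set.Icc 1 n) := by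
  ext x
  simp only [Set.mem_setOf_eq, Set.mem_image, Set.mem_Icc]
  constructor
  · rintro ⟨k, h1, h2, rfl⟩; exact ⟨k, ⟨h1, h2⟩, rfl⟩
  · rintro ⟨k, ⟨h1, h2⟩, rfl⟩; exact ⟨k, h1, h2, rfl⟩

lemma maxRatio_set_finite {n : ℕ} (W : Fin n → ℝ) :
    {x : ℝ | ∃ k : ℕ, 1 ≤ k ∧ k ≤ n ∧ x = (sumTopK W k)^2 / (k : ℝ)}.Finite := by
  rw [maxRatio_set_eq]
  exact (Set.finite_Icc 1 n).image _

lemma le_maxRatio {n : ℕ} (W : Fin n → ℝ) {k : ℕ} (h1 : 1 ≤ k) (h2 : k ≤ n) :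
    (sumTopK W k)^2 / (k : ℝ) ≤ maxRatio W :=
  le_csSup (maxRatio_set_finite W).bddAbove ⟨k, h1, h2, rfl⟩

lemma maxRatio_spec {n : ℕ} (W : Fin n → ℝ) (hn : 1 ≤ n) :
    ∃ k : ℕ, 1 ≤ k ∧ k ≤ n ∧ maxRatio W = (sumTopK W k)^2 / (k : ℝ) := by
  have hne : {x : ℝ | ∃ k : ℕ, 1 ≤ k ∧ k ≤ n ∧ x = (sumTopK W k)^2 / (k : ℝ)}.Nonempty :=
    ⟨_, 1, le_refl 1, hn, rfl⟩
  exact hne.csSup_mem (maxRatio_set_finite W)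

theorem stmt4 {n : ℕ} (W : Fin n → ℝ) (hW : W ≠ 0) :
    IsLeast {d : ℝ | ∃ α : ℝ, ∃ T : Fin n → ℝ, 0 < α ∧ IsTernary T ∧
        d = ∑ i, (α * T i - W i)^2}
      ((∑ i, (W i)^2) - maxRatio W) := by
  have hn : 1 ≤ n := by
    rcases Nat.eq_zero_or_pos n with h | h
    · subst h; exact absurd (Subsingleton.elim W 0) hW
    · exact h
  constructor
  · -- membership: the minimum is attained
    obtain ⟨k, hk1, hkn, hmr⟩ := maxRatio_spec W hn
    obtain ⟨s, hsc, hssum⟩ := sumTopK_spec W hkn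
    set c : ℝ := sumTopK W k with hc
    -- c > 0
    obtain ⟨i0, hi0⟩ := Function.ne_iff.mp hW
    have hi0' : W i0 ≠ 0 := by simpa using hi0
    have hcpos : 0 < c := by
      obtain ⟨u, hu1, -, huc⟩ := Finset.exists_subsuperset_card_eq
        (Finset.subset_univ {i0}) (by simpa using hk1) (by simpa using hkn)
      have h1 : |W i0| ≤ ∑ i ∈ u, |W i| :=
        Finset.single_le_sum (fun i _ => abs_nonneg (W i)) (hu1 (Finset.mem_singleton_self i0))
      have h2 : ∑ i ∈ u, |W i| ≤ c := le_sumTopK W u huc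
      have : 0 < |W i0| := abs_pos.mpr hi0'
      linarith
    have hkpos : (0 : ℝ) < (k : ℝ) := by exact_mod_cast hk1
    set α : ℝ := c / (k : ℝ) with hα
    have hαpos : 0 < α := div_pos hcpos hkpos
    set T : Fin n → ℝ := fun i => if i ∈ s then (if 0 ≤ W i then 1 else -1) else 0 with hT
    refine ⟨α, T, hαpos, ?_, ?_⟩
    · intro i; simp only [hT]; split_ifs <;> tauto
    · -- compute the sum
      have hsum : ∀ i ∈ s, (α * T i - W i)^2 = α^2 - 2*α*|W i| + (W i)^2 := by
        intro i hi
        rcases le_or_gt 0 (W i) with h | h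
        · have : T i = 1 := by simp [hT, hi, h]
          rw [this, abs_of_nonneg h]; ring
        · have : T i = -1 := by simp [hT, hi, not_le.mpr h]
          rw [this, abs_of_neg h]; ring
      have hcomp : ∑ i ∈ sᶜ, (α * T i - W i)^2 = ∑ i ∈ sᶜ, (W i)^2 := by
        apply Finset.sum_congr rfl
        intro i hi
        have : T i = 0 := by simp [hT, (Finset.mem_compl.mp hi)]
        rw [this]; ring_nf
      have key : ∑ i, (α * T i - W i)^2 = (k : ℝ) * α^2 - 2*α*c + ∑ i, (W i)^2 := by
        rw [← Finset.sum_add_sum_compl s, Finset.sum_congr rfl hsum, hcomp,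
          ← Finset.sum_add_sum_compl s (fun i => (W i)^2)]
        rw [Finset.sum_add_distrib, Finset.sum_sub_distrib, Finset.sum_const, hsc]
        rw [← Finset.mul_sum, ← hssum]
        simp only [nsmul_eq_mul]
        ring
      rw [key, hmr, hα]
      field_simp
      ring
  · -- lower bound
    rintro d ⟨α, T, hαpos, hT, rfl⟩
    set s : Finset (Fin n) := Finset.univ.filter (fun i => T i ≠ 0) with hs
    set k := s.card with hkdef
    have hkn : k ≤ n := by
      have := Finset.card_filter_le Finset.univ (fun i => T i ≠ 0)
      simpa [hkdef, hs] using this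
    have hTsq : ∀ i, (T i)^2 = if i ∈ s then 1 else 0 := by
      intro i
      rcases hT i with h | h | h <;> simp [hs, h]
    have habs : ∀ i, |T i| ≤ 1 := by
      intro i; rcases hT i with h | h | h <;> simp [h]
    have key : ∑ i, (α * T i - W i)^2 =
        α^2 * (k : ℝ) - 2*α*(∑ i, T i * W i) + ∑ i, (W i)^2 := by
      rw [Finset.sum_congr rfl (fun i _ => show (α * T i - W i)^2 =
          α^2 * (T i)^2 - 2*α*(T i * W i) + (W i)^2 by ring)]
      rw [Finset.sum_add_distrib, Finset.sum_sub_distrib, ← Finset.mul_sum, ← Finset.mul_sum]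
      congr 2
      simp_rw [hTsq]
      rw [Finset.sum_ite_mem, Finset.univ_inter, Finset.sum_const]
      simp [hkdef]
    have hTW : ∑ i, T i * W i ≤ ∑ i ∈ s, |W i| := by
      rw [← Finset.sum_filter_add_sum_filter_not Finset.univ (fun i => T i ≠ 0)
        (fun i => T i * W i)]
      have h0 : ∑ i ∈ Finset.univ.filter (fun i => ¬T i ≠ 0), T i * W i = 0 := by
        apply Finset.sum_eq_zero
        intro i hi
        have : T i = 0 := by simpa using (Finset.mem_filter.mp hi).2
        simp [this]
      rw [h0, add_zero]
      apply Finset.sum_le_sum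
      intro i hi
      calc T i * W i ≤ |T i * W i| := le_abs_self _
        _ = |T i| * |W i| := abs_mul _ _
        _ ≤ 1 * |W i| := by
            exact mul_le_mul_of_nonneg_right (habs i) (abs_nonneg _)
        _ = |W i| := one_mul _
    have hst : ∑ i ∈ s, |W i| ≤ sumTopK W k := le_sumTopK W s rfl
    set c : ℝ := sumTopK W k with hc
    have hd : α^2 * (k : ℝ) - 2*α*c + ∑ i, (W i)^2 ≤ ∑ i, (α * T i - W i)^2 := by
      rw [key]
      have : ∑ i, T i * W i ≤ c := le_trans hTW hst
      nlinarith
    have hmr0 : 0 ≤ maxRatio W := by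
      have h1 := le_maxRatio W (le_refl 1) hn
      have h2 : (0 : ℝ) ≤ (sumTopK W 1)^2 / (1 : ℝ) := by positivity
      exact le_trans (by simpa using h2) h1
    rcases Nat.eq_zero_or_pos k with hk0 | hk1
    · -- k = 0 : all T i are 0
      have hc0 : c = 0 := by
        obtain ⟨t, htc, hteq⟩ := sumTopK_spec W hkn
        have ht0 : t = ∅ := Finset.card_eq_zero.mp (by rw [htc, hk0])
        rw [hc, hteq, ht0]
        simp
      rw [hc0] at hd
      simp only [hk0, Nat.cast_zero] at hd
      have : ∑ i, (W i)^2 ≤ ∑ i, (α * T i - W i)^2 := by linarith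
      linarith
    · have hkpos : (0 : ℝ) < (k : ℝ) := by exact_mod_cast hk1
      have h1 : (sumTopK W k)^2 / (k : ℝ) ≤ maxRatio W := le_maxRatio W hk1 hkn
      have h4 : α^2 * (k : ℝ) - 2*α*c + c^2/(k : ℝ) = ((k : ℝ)*α - c)^2 / (k : ℝ) := by
        field_simp
        ring
      have h5 : 0 ≤ α^2 * (k : ℝ) - 2*α*c + c^2/(k : ℝ) := by
        rw [h4]; positivity
      rw [← hc] at h1
      linarith
end

section
/- For any nonzero W ∈ ℝ^n, max_{1 ≤ k ≤ n} ‖W_[k]‖₁²/k ≥ ‖W‖₁²/n and max_{1 ≤ k ≤ n} ‖W_[k]‖₁²/k ≥ ‖W‖_∞², with the first attained at k = n and the second at k = 1. Consequently, the optimal ternary approximation error satisfies ‖α*T* − W‖² ≤ ‖W‖² − max(‖W‖₁²/n, ‖W‖_∞²). -/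
open Finset

theorem stmt9 {n : ℕ} (W : Fin n → ℝ) (hW : W ≠ 0) :
    (∑ i, |W i|)^2 / (n : ℝ) ≤ maxRatio W ∧
    (⨆ i, |W i|)^2 ≤ maxRatio W ∧
    sumTopK W n = ∑ i, |W i| ∧
    sumTopK W 1 = ⨆ i, |W i| ∧
    ∀ d : ℝ, IsLeast {d : ℝ | ∃ α : ℝ, ∃ T : Fin n → ℝ, 0 < α ∧ IsTernary T ∧
        d = ∑ i, (α * T i - W i)^2} d →
      d ≤ (∑ i, (W i)^2) - max ((∑ i, |W i|)^2 / (n : ℝ)) ((⨆ i, |W i|)^2) := by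
  have hn : 0 < n := by
    rcases Nat.eq_zero_or_pos n with h | h
    · subst h
      exact absurd (funext fun i => absurd i.isLt (Nat.not_lt_zero _)) hW
    · exact h
  have : Nonempty (Fin n) := ⟨⟨0, hn⟩⟩
  -- part 3
  have h3 : sumTopK W n = ∑ i, |W i| := by
    unfold sumTopK
    have hs : {s : Finset (Fin n) | s.card = n} = {Finset.univ} := by
      ext s
      simp only [Set.mem_setOf_eq, Set.mem_singleton_iff]
      constructor
      · intro h
        exact Finset.eq_univ_of_card s (by rw [h, Fintype.card_fin])
      · intro h
        subst h
        rw [Finset.card_univ, Fintype.card_fin]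
    rw [hs, Set.image_singleton, csSup_singleton]
  -- part 4
  have h4 : sumTopK W 1 = ⨆ i, |W i| := by
    unfold sumTopK
    have hs : ((fun s : Finset (Fin n) => ∑ i ∈ s, |W i|) '' {s : Finset (Fin n) | s.card = 1})
        = Set.range (fun i => |W i|) := by
      ext x
      constructor
      · rintro ⟨s, hs, rfl⟩
        obtain ⟨i, rfl⟩ := Finset.card_eq_one.mp hs
        exact ⟨i, by simp⟩
      · rintro ⟨i, rfl⟩
        exact ⟨{i}, Finset.card_singleton i, by simp⟩
    rw [hs, ← iSup]
  -- boundedness of the maxRatio set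
  have hseteq : {x : ℝ | ∃ k : ℕ, 1 ≤ k ∧ k ≤ n ∧ x = (sumTopK W k)^2 / (k : ℝ)}
      = (fun k : ℕ => (sumTopK W k)^2 / (k : ℝ)) '' (Set.Icc 1 n) := by
    ext x
    constructor
    · rintro ⟨k, h1, h2, rfl⟩; exact ⟨k, ⟨h1, h2⟩, rfl⟩
    · rintro ⟨k, ⟨h1, h2⟩, rfl⟩; exact ⟨k, h1, h2, rfl⟩
  have hbdd : BddAbove {x : ℝ | ∃ k : ℕ, 1 ≤ k ∧ k ≤ n ∧ x = (sumTopK W k)^2 / (k : ℝ)} := by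
    rw [hseteq]
    exact ((Set.finite_Icc 1 n).image _).bddAbove
  have h1 : (∑ i, |W i|)^2 / (n : ℝ) ≤ maxRatio W := by
    rw [← h3]
    exact le_csSup hbdd ⟨n, hn, le_refl n, rfl⟩
  have h2 : (⨆ i, |W i|)^2 ≤ maxRatio W := by
    rw [← h4]
    exact le_csSup hbdd ⟨1, le_refl 1, hn, by norm_num⟩
  refine ⟨h1, h2, h3, h4, ?_⟩
  -- last part
  intro d hd
  obtain ⟨-, hdlb⟩ := hd
  set S := ∑ i, |W i| with hSdef
  have hSpos : 0 < S := by
    have hex : ∃ i, W i ≠ 0 := by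
      by_contra h
      push_neg at h
      exact hW (funext h)
    obtain ⟨i0, hi0⟩ := hex
    exact Finset.sum_pos' (fun i _ => abs_nonneg _)
      ⟨i0, Finset.mem_univ i0, abs_pos.mpr hi0⟩
  have hnR : (0:ℝ) < (n:ℝ) := Nat.cast_pos.mpr hn
  -- bound 1 : d ≤ ∑ W² - S²/n
  have bound1 : d ≤ (∑ i, (W i)^2) - S^2 / (n : ℝ) := by
    set α := S / (n : ℝ) with hα
    have hαpos : 0 < α := div_pos hSpos hnR
    set T : Fin n → ℝ := fun i => Real.sign (W i) with hT
    have hTt : IsTernary T := by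
      intro i
      rcases lt_trichotomy (W i) 0 with h | h | h
      · left; simp [hT, Real.sign_of_neg h]
      · right; left; simp [hT, h, Real.sign_zero]
      · right; right; simp [hT, Real.sign_of_pos h]
    have hmem : (∑ i, (α * T i - W i)^2) ∈ {d : ℝ | ∃ α : ℝ, ∃ T : Fin n → ℝ, 0 < α ∧
        IsTernary T ∧ d = ∑ i, (α * T i - W i)^2} := ⟨α, T, hαpos, hTt, rfl⟩
    have key : (∑ i, (α * T i - W i)^2) ≤ ∑ i, (α^2 - 2*α*|W i| + (W i)^2) := by
      apply Finset.sum_le_sum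
      intro i _
      rcases lt_trichotomy (W i) 0 with h | h | h
      · rw [hT]; simp only [Real.sign_of_neg h]
        rw [abs_of_neg h]; nlinarith
      · simp only [hT, h, Real.sign_zero, mul_zero, zero_sub, neg_zero, abs_zero]
        nlinarith [sq_nonneg α]
      · rw [hT]; simp only [Real.sign_of_pos h]
        rw [abs_of_pos h]; nlinarith
    have hsum : ∑ i, (α^2 - 2*α*|W i| + (W i)^2)
        = (n : ℝ)*α^2 - 2*α*S + ∑ i, (W i)^2 := by
      rw [Finset.sum_add_distrib, Finset.sum_sub_distrib, ← Finset.mul_sum,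
        Finset.sum_const, Finset.card_univ, Fintype.card_fin, nsmul_eq_mul, hSdef]
    have hval : (n : ℝ)*α^2 - 2*α*S + ∑ i, (W i)^2 = (∑ i, (W i)^2) - S^2 / (n : ℝ) := by
      rw [hα]; field_simp; ring
    calc d ≤ ∑ i, (α * T i - W i)^2 := hdlb hmem
      _ ≤ ∑ i, (α^2 - 2*α*|W i| + (W i)^2) := key
      _ = (∑ i, (W i)^2) - S^2 / (n : ℝ) := by rw [hsum, hval]
  -- bound 2 : d ≤ ∑ W² - (⨆ |W|)²
  have bound2 : d ≤ (∑ i, (W i)^2) - (⨆ i, |W i|)^2 := by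
    obtain ⟨i0, hi0⟩ : ∃ i0, |W i0| = ⨆ i, |W i| := exists_eq_ciSup_of_finite
    have hWi0 : W i0 ≠ 0 := by
      intro h
      have hle : ∀ i, |W i| ≤ ⨆ i, |W i| := fun i =>
        le_ciSup (f := fun i => |W i|) (Set.Finite.bddAbove (Set.finite_range _)) i
      have : ∀ i, W i = 0 := by
        intro i
        have := hle i
        rw [← hi0, h, abs_zero] at this
        exact abs_nonpos_iff.mp this
      exact hW (funext this)
    set α := |W i0| with hα
    have hαpos : 0 < α := abs_pos.mpr hWi0
    set T : Fin n → ℝ := fun j => if j = i0 then Real.sign (W i0) else 0 with hT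
    have hTt : IsTernary T := by
      intro j
      by_cases hj : j = i0
      · rcases lt_trichotomy (W i0) 0 with h | h | h
        · left; simp [hT, hj, Real.sign_of_neg h]
        · exact absurd h hWi0
        · right; right; simp [hT, hj, Real.sign_of_pos h]
      · right; left; simp [hT, hj]
    have hmem : (∑ i, (α * T i - W i)^2) ∈ {d : ℝ | ∃ α : ℝ, ∃ T : Fin n → ℝ, 0 < α ∧
        IsTernary T ∧ d = ∑ i, (α * T i - W i)^2} := ⟨α, T, hαpos, hTt, rfl⟩
    have hterm : ∀ j, (α * T j - W j)^2 = (W j)^2 - (if j = i0 then (W i0)^2 else 0) := by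
      intro j
      by_cases hj : j = i0
      · subst hj
        simp only [hT, if_pos rfl, hα]
        have hms : |W j| * Real.sign (W j) = W j := by
          rcases lt_trichotomy (W j) 0 with h | h | h
          · rw [Real.sign_of_neg h, abs_of_neg h]; ring
          · rw [h]; simp
          · rw [Real.sign_of_pos h, abs_of_pos h]; ring
        rw [hms]
        simp
      · simp [hT, hj]
    have hsum : ∑ i, (α * T i - W i)^2 = (∑ i, (W i)^2) - (W i0)^2 := by
      simp only [hterm]
      rw [Finset.sum_sub_distrib, Finset.sum_ite_eq' Finset.univ i0 (fun _ => (W i0)^2)]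
      simp
    have hsq : (W i0)^2 = (⨆ i, |W i|)^2 := by
      rw [← hi0, sq_abs]
    calc d ≤ ∑ i, (α * T i - W i)^2 := hdlb hmem
      _ = (∑ i, (W i)^2) - (⨆ i, |W i|)^2 := by rw [hsum, hsq]
  rcases max_choice ((∑ i, |W i|)^2 / (n : ℝ)) ((⨆ i, |W i|)^2) with h | h
  · rw [h]; exact bound1
  · rw [h]; exact bound2
end

section
/- Binary special case: for nonzero W ∈ ℝ^n, the solution of min_{α>0, B∈{-1,1}^n} ‖αB − W‖² is B* = sign'(W) (sign with any choice ±1 at zero entries) and α* = ‖W‖₁/n, with optimal value ‖W‖² − ‖W‖₁²/n. -/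
open Finset

theorem stmt12 {n : ℕ} (W : Fin n → ℝ) (hW : W ≠ 0)
    (sign' : ℝ → ℝ)
    (hs : ∀ x : ℝ, (0 < x → sign' x = 1) ∧ (x < 0 → sign' x = -1) ∧
      (sign' x = 1 ∨ sign' x = -1)) :
    (∀ α : ℝ, 0 < α → ∀ B : Fin n → ℝ, (∀ i, B i = -1 ∨ B i = 1) →
      ∑ i, ((∑ j, |W j|) / (n : ℝ) * sign' (W i) - W i)^2
        ≤ ∑ i, (α * B i - W i)^2) ∧
    ∑ i, ((∑ j, |W j|) / (n : ℝ) * sign' (W i) - W i)^2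
      = (∑ i, (W i)^2) - (∑ i, |W i|)^2 / (n : ℝ) := by
  have hn : 0 < n := by
    by_contra h
    push_neg at h
    interval_cases n
    exact hW (funext fun i => i.elim0)
  have hnR : (0:ℝ) < n := Nat.cast_pos.mpr hn
  set S := ∑ j, |W j| with hSdef
  have key : ∀ i, sign' (W i) * W i = |W i| ∧ (sign' (W i))^2 = 1 := by
    intro i
    obtain ⟨h1, h2, h3⟩ := hs (W i)
    rcases lt_trichotomy (W i) 0 with h | h | h
    · constructor
      · rw [h2 h, abs_of_neg h]; ring
      · rw [h2 h]; ring
    · rcases h3 with h4 | h4 <;> exact ⟨by rw [h]; simp, by rw [h4]; ring⟩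
    · constructor
      · rw [h1 h, abs_of_pos h]; ring
      · rw [h1 h]; ring
  have expand : ∑ i, (S / (n:ℝ) * sign' (W i) - W i)^2
      = (∑ i, (W i)^2) - S^2 / (n:ℝ) := by
    have h1 : ∑ i, (S / (n:ℝ) * sign' (W i) - W i)^2
        = ∑ i, ((S/(n:ℝ))^2 - 2*(S/(n:ℝ))*|W i| + (W i)^2) := by
      refine Finset.sum_congr rfl fun i _ => ?_
      obtain ⟨k1, k2⟩ := key i
      linear_combination (S/(n:ℝ))^2 * k2 - 2*(S/(n:ℝ)) * k1
    rw [h1, Finset.sum_add_distrib, Finset.sum_sub_distrib, Finset.sum_const,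
      ← Finset.mul_sum, ← hSdef, Finset.card_univ, Fintype.card_fin,
      nsmul_eq_mul]
    field_simp
    ring
  refine ⟨fun α hα B hB => ?_, expand⟩
  rw [expand]
  have hexp2 : ∑ i, (α * B i - W i)^2
      = α^2 * n - 2*α*(∑ i, B i * W i) + ∑ i, (W i)^2 := by
    have h1 : ∑ i, (α * B i - W i)^2
        = ∑ i, (α^2 - 2*α*(B i * W i) + (W i)^2) := by
      refine Finset.sum_congr rfl fun i _ => ?_
      rcases hB i with h | h <;> rw [h] <;> ring
    rw [h1, Finset.sum_add_distrib, Finset.sum_sub_distrib, Finset.sum_const,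
      ← Finset.mul_sum, Finset.card_univ, Fintype.card_fin, nsmul_eq_mul]
    ring
  rw [hexp2]
  have hBW : ∑ i, B i * W i ≤ S := by
    refine Finset.sum_le_sum fun i _ => ?_
    rcases hB i with h | h
    · rw [h]; simpa using neg_le_abs (W i)
    · rw [h]; simpa using le_abs_self (W i)
  have h0 : 0 ≤ α^2*(n:ℝ) - 2*α*S + S^2/(n:ℝ) := by
    have hsq := sq_nonneg (α - S/(n:ℝ))
    have h' : (α - S/(n:ℝ))^2 * (n:ℝ) = α^2*(n:ℝ) - 2*α*S + S^2/(n:ℝ) := by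
      field_simp; ring
    nlinarith
  have h2 : 2*α*(∑ i, B i * W i) ≤ 2*α*S := by nlinarith
  linarith
end
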